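/- arXiv:1803.03339 — 3 statements merged into one kernel-verified Lean document; each statement's English description precedes it below -/
import Mathlib

section
/- Let p be an odd prime and 𝔯 ≥ 3. Let C_0 = (⋃_{l=0}^{(p^{𝔯−1}−1)/2} D_l^{(p^𝔯)}) ∪ pZ_{p^{𝔯−1}} and C_1 = ⋃_{l=(p^{𝔯−1}+1)/2}^{p^{𝔯−1}−1} D_l^{(p^𝔯)}. Let v be coprime to p, 0 ≤ v < p^{𝔯−1}, and V_v = {v, v+p^{𝔯−1}, ..., v+(p−1)p^{𝔯−1}}. If Q_{𝔯−1}(v) = j + i·p^{𝔯−2} with 0 ≤ i < p and 0 ≤ j ≤ (p^{𝔯−2}−1)/2, then |V_v ∩ C_0| = (p+1)/2 and |V_v ∩ C_1| = (p−1)/2. -/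
/-!
Write `s = r - 1` and `φ = φ(p^s) = p^(s-1) (p-1)`. Modulo `p^(2s)` the binomial theorem gives
`(v + k p^s)^φ ≡ v^φ + k φ v^(φ-1) p^s`, so `Q_s(v + k p^s) ≡ Q_s(v) + k c p^(s-1) (mod p^s)` with
`c = (p-1) v^(φ-1)` prime to `p`. Hence along the fiber only the top base-`p` digit of the Euler
quotient moves, running through the permutation `k ↦ i + k c` of `ℤ/p`. As the low part `j` is at
most `(p^(s-1) - 1)/2`, the quotient is at most `(p^s - 1)/2` exactly when that digit is at most
`(p-1)/2`, which happens for `(p+1)/2` values of `k`. The other `(p-1)/2` fiber elements lie in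
`C_1`, because `C_0` and `C_1` split the units modulo `p^r`.
-/

/-- The Euler quotient modulo `p^s` of `u`, as a representative in `{0,...,p^s-1}`. -/
def eulerQuotient (p s u : ℕ) : ℕ :=
  ((u ^ (p ^ (s - 1) * (p - 1)) - 1) / p ^ s) % p ^ s

/-- The level set `D_l^{(p^r)} = {u : 0 ≤ u < p^r, gcd(u,p)=1, Q_{r-1}(u)=l}`. -/
def levelSetD (p r l : ℕ) : Finset ℕ :=
  (Finset.range (p ^ r)).filter (fun u => Nat.Coprime u p ∧ eulerQuotient p (r - 1) u = l)

/-- `C_0 = (⋃_{l=0}^{(p^{r-1}-1)/2} D_l^{(p^r)}) ∪ pZ_{p^{r-1}}`. -/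
def classC0 (p r : ℕ) : Finset ℕ :=
  (Finset.range ((p ^ (r - 1) - 1) / 2 + 1)).biUnion (levelSetD p r) ∪
    (Finset.range (p ^ r)).filter (fun n => p ∣ n)

/-- `C_1 = ⋃_{l=(p^{r-1}+1)/2}^{p^{r-1}-1} D_l^{(p^r)}`. -/
def classC1 (p r : ℕ) : Finset ℕ :=
  (Finset.Icc ((p ^ (r - 1) + 1) / 2) (p ^ (r - 1) - 1)).biUnion (levelSetD p r)

/-- The fiber `V_v = {v, v + p^{r-1}, ..., v + (p-1)p^{r-1}}`. -/
def fiberSet (p r v : ℕ) : Finset ℕ :=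
  (Finset.range p).image (fun k => v + k * p ^ (r - 1))

open Finset

theorem Nat.ModEq.div_mod_eq {a b n : ℕ} (h : a ≡ b [MOD n * n]) : a / n % n = b / n % n := by
  rw [← Nat.mod_mul_right_div_self, ← Nat.mod_mul_right_div_self]
  exact congrArg (· / n) h

theorem Nat.add_pow_modEq_sq (a b n : ℕ) :
    (a + b) ^ n ≡ a ^ n + n * a ^ (n - 1) * b [MOD b ^ 2] := by
  rw [Nat.modEq_iff_dvd, ← dvd_neg]
  push_cast
  convert sq_dvd_add_pow_sub_sub (b : ℤ) a n using 1
  ring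

theorem Nat.add_mul_mod_mul {j m : ℕ} (hj : j < m) (w p : ℕ) :
    (j + w * m) % (m * p) = j + w % p * m := by
  rw [Nat.mod_mul, Nat.add_mul_mod_self_right, Nat.mod_eq_of_lt hj,
    Nat.add_mul_div_right _ _ (by omega), Nat.div_eq_of_lt hj, zero_add, mul_comm]

theorem Nat.add_mul_le_mul_sub_one_div_two_iff {j m p t : ℕ} (hm : 0 < m) (hp : Odd p)
    (hj : j ≤ (m - 1) / 2) : j + t * m ≤ (m * p - 1) / 2 ↔ t ≤ (p - 1) / 2 := by
  obtain ⟨a, rfl⟩ := hp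
  have hhalf : (m * (2 * a + 1) - 1) / 2 = a * m + (m - 1) / 2 := by
    rw [show m * (2 * a + 1) = 2 * (a * m) + m by ring]
    omega
  rw [hhalf, show (2 * a + 1 - 1) / 2 = a by omega]
  constructor
  · intro h
    by_contra! hat
    have := Nat.mul_le_mul_right m (show a + 1 ≤ t from hat)
    rw [add_one_mul] at this
    omega
  · intro h
    have := Nat.mul_le_mul_right m h
    omega

theorem pow_sub_one_div_mod_add_mul {n v : ℕ} (hn : 0 < n) (hv : 0 < v) (e k : ℕ) :
    ((v + k * n) ^ e - 1) / n % n = ((v ^ e - 1) / n + e * v ^ (e - 1) * k) % n := by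
  have hbinom : (v + k * n) ^ e - 1 + 1 ≡ v ^ e - 1 + e * v ^ (e - 1) * k * n + 1 [MOD n * n] := by
    rw [Nat.sub_add_cancel (Nat.one_le_pow _ _ (by omega)),
      show v ^ e - 1 + e * v ^ (e - 1) * k * n + 1 = v ^ e + e * v ^ (e - 1) * (k * n) by
        have := Nat.one_le_pow e v hv
        rw [← mul_assoc]; omega]
    exact (Nat.add_pow_modEq_sq v (k * n) e).of_dvd ⟨k * k, by ring⟩
  rw [(Nat.ModEq.add_right_cancel' 1 hbinom).div_mod_eq, Nat.add_mul_div_right _ _ hn]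

theorem eulerQuotient_add_mul_pow {p s v : ℕ} (hp : 0 < p) (hv : 0 < v) (k : ℕ) :
    eulerQuotient p s (v + k * p ^ s) =
      (eulerQuotient p s v + p ^ (s - 1) * (p - 1) * v ^ (p ^ (s - 1) * (p - 1) - 1) * k)
        % p ^ s := by
  unfold eulerQuotient
  rw [pow_sub_one_div_mod_add_mul (pow_pos hp s) hv, Nat.mod_add_mod]

theorem card_filter_range_add_mul_mod {p c : ℕ} (hc : c.Coprime p) (i : ℕ) (P : ℕ → Prop)
    [DecidablePred P] : #{k ∈ range p | P ((i + k * c) % p)} = #{t ∈ range p | P t} := by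
  set f : ℕ → ℕ := fun k => (i + k * c) % p
  have hinj : Set.InjOn f (range p) := by
    intro k hk l hl hkl
    have := Nat.ModEq.cancel_right_of_coprime hc.symm (Nat.ModEq.add_left_cancel' i hkl)
    rwa [Nat.ModEq, Nat.mod_eq_of_lt (mem_range.1 hk), Nat.mod_eq_of_lt (mem_range.1 hl)] at this
  have himage : (range p).image f = range p := by
    refine eq_of_subset_of_card_le (fun x hx => ?_) (card_image_of_injOn hinj).ge
    obtain ⟨k, hk, rfl⟩ := mem_image.1 hx
    exact mem_range.2 (Nat.mod_lt _ (by rw [mem_range] at hk; omega))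
  conv_rhs => rw [← himage]
  rw [filter_image, card_image_of_injOn (hinj.mono (coe_subset.2 (filter_subset _ _)))]

theorem mem_classC0_iff {p r u : ℕ} (hp : 1 < p) (hu : u < p ^ r) (hup : u.Coprime p) :
    u ∈ classC0 p r ↔ eulerQuotient p (r - 1) u ≤ (p ^ (r - 1) - 1) / 2 := by
  have hndvd : ¬ p ∣ u := fun h => hp.ne' (hup.symm.eq_one_of_dvd h)
  simp only [classC0, levelSetD, mem_union, mem_biUnion, mem_range, mem_filter, hu, hndvd,
    true_and, and_false, or_false]
  constructor
  · rintro ⟨l, hl, -, rfl⟩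
    omega
  · intro h
    exact ⟨_, by omega, hup, rfl⟩

theorem mem_classC1_iff {p r u : ℕ} (hp : 1 < p) (hu : u < p ^ r) (hup : u.Coprime p) :
    u ∈ classC1 p r ↔ u ∉ classC0 p r := by
  have hlt : eulerQuotient p (r - 1) u < p ^ (r - 1) := Nat.mod_lt _ (by positivity)
  rw [mem_classC0_iff hp hu hup]
  simp only [classC1, levelSetD, mem_biUnion, mem_Icc, mem_filter, mem_range, hu, true_and]
  constructor
  · rintro ⟨l, hl, -, rfl⟩
    omega
  · intro h
    exact ⟨_, by omega, hup, rfl⟩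

section Fiber

variable {p r v : ℕ}

theorem add_mul_pow_lt_pow (hv : v < p ^ (r - 1)) (hr : 1 ≤ r) {k : ℕ} (hk : k < p) :
    v + k * p ^ (r - 1) < p ^ r := by
  obtain ⟨s, rfl⟩ : ∃ s, r = s + 1 := ⟨r - 1, by omega⟩
  rw [Nat.add_sub_cancel, pow_succ] at *
  nlinarith

theorem coprime_add_mul_pow (hvp : v.Coprime p) (hr : 2 ≤ r) (k : ℕ) :
    (v + k * p ^ (r - 1)).Coprime p := by
  rw [show k * p ^ (r - 1) = k * p ^ (r - 2) * p by
    rw [mul_assoc, ← pow_succ]; congr 2; omega, Nat.coprime_add_mul_right_left]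
  exact hvp

theorem card_fiberSet_inter (hp : 0 < p) (C : Finset ℕ) :
    #(fiberSet p r v ∩ C) = #{k ∈ range p | v + k * p ^ (r - 1) ∈ C} := by
  rw [fiberSet, ← filter_mem_eq_inter, filter_image, card_image_of_injective]
  intro k l hkl
  exact Nat.eq_of_mul_eq_mul_right (pow_pos hp _) (by simpa using hkl)

theorem card_fiberSet_inter_classC0_add_card_fiberSet_inter_classC1 (hp : 1 < p) (hr : 2 ≤ r)
    (hv : v < p ^ (r - 1)) (hvp : v.Coprime p) :
    #(fiberSet p r v ∩ classC0 p r) + #(fiberSet p r v ∩ classC1 p r) = p := by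
  have hC1 : {k ∈ range p | v + k * p ^ (r - 1) ∈ classC1 p r} =
      {k ∈ range p | v + k * p ^ (r - 1) ∉ classC0 p r} := by
    refine filter_congr fun k hk => ?_
    exact mem_classC1_iff hp (add_mul_pow_lt_pow hv (by omega) (mem_range.1 hk))
      (coprime_add_mul_pow hvp hr k)
  rw [card_fiberSet_inter (by omega), card_fiberSet_inter (by omega), hC1,
    card_filter_add_card_filter_not, card_range]

theorem exists_coprime_eulerQuotient_add_mul_pow (hp : p.Prime) (hr : 2 ≤ r)
    (hvp : v.Coprime p) {i j : ℕ} (hj : j < p ^ (r - 2))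
    (hQ : eulerQuotient p (r - 1) v = j + i * p ^ (r - 2)) :
    ∃ c, c.Coprime p ∧ ∀ k,
      eulerQuotient p (r - 1) (v + k * p ^ (r - 1)) = j + (i + k * c) % p * p ^ (r - 2) := by
  have hv : 0 < v := Nat.pos_of_ne_zero fun h => hp.one_lt.ne' (by simpa [h] using hvp)
  refine ⟨(p - 1) * v ^ (p ^ (r - 2) * (p - 1) - 1), ?_, fun k => ?_⟩
  · exact ((Nat.coprime_self_sub_left hp.one_lt.le).2 (Nat.coprime_one_left p)).mul_left
      (hvp.pow_left _)
  · rw [eulerQuotient_add_mul_pow hp.pos hv, hQ, show r - 1 - 1 = r - 2 by omega,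
      show p ^ (r - 1) = p ^ (r - 2) * p by rw [← pow_succ]; congr 1; omega,
      ← Nat.add_mul_mod_mul hj]
    congr 1
    ring

theorem card_fiberSet_inter_classC0 (hp : p.Prime) (hodd : Odd p) (hr : 2 ≤ r)
    (hv : v < p ^ (r - 1)) (hvp : v.Coprime p) {i j : ℕ} (hj : j ≤ (p ^ (r - 2) - 1) / 2)
    (hQ : eulerQuotient p (r - 1) v = j + i * p ^ (r - 2)) :
    #(fiberSet p r v ∩ classC0 p r) = (p + 1) / 2 := by
  have hm : 0 < p ^ (r - 2) := pow_pos hp.pos _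
  have hp0 := hp.pos
  obtain ⟨c, hc, hQk⟩ := exists_coprime_eulerQuotient_add_mul_pow hp hr hvp (by omega) hQ
  have hpow : p ^ (r - 1) = p ^ (r - 2) * p := by rw [← pow_succ]; congr 1; omega
  calc #(fiberSet p r v ∩ classC0 p r)
      = #{k ∈ range p | (i + k * c) % p ≤ (p - 1) / 2} := by
        rw [card_fiberSet_inter hp.pos]
        refine congrArg card (filter_congr fun k hk => ?_)
        rw [mem_classC0_iff hp.one_lt (add_mul_pow_lt_pow hv (by omega) (mem_range.1 hk))
          (coprime_add_mul_pow hvp hr k), hQk k, hpow]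
        exact Nat.add_mul_le_mul_sub_one_div_two_iff hm hodd hj
    _ = #{t ∈ range p | t ≤ (p - 1) / 2} := card_filter_range_add_mul_mod hc i (· ≤ (p - 1) / 2)
    _ = (p + 1) / 2 := by
        rw [show {t ∈ range p | t ≤ (p - 1) / 2} = range ((p - 1) / 2 + 1) by
          ext t; simp only [mem_filter, mem_range]; omega, card_range]
        omega

end Fiber

theorem fiber_inter_classes_card_low_general (p : ℕ) (hp : p.Prime) (hodd : Odd p)
    (r : ℕ) (hr : 3 ≤ r) (v : ℕ) (hv : v < p ^ (r - 1)) (hvp : Nat.Coprime v p)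
    (i j : ℕ) (hj : j ≤ (p ^ (r - 2) - 1) / 2)
    (hQ : eulerQuotient p (r - 1) v = j + i * p ^ (r - 2)) :
    (fiberSet p r v ∩ classC0 p r).card = (p + 1) / 2 ∧
    (fiberSet p r v ∩ classC1 p r).card = (p - 1) / 2 := by
  have hC0 := card_fiberSet_inter_classC0 hp hodd (by omega) hv hvp hj hQ
  have hsum := card_fiberSet_inter_classC0_add_card_fiberSet_inter_classC1 hp.one_lt (by omega) hv hvp
  obtain ⟨a, rfl⟩ := hodd
  omega

theorem fiber_inter_classes_card_low (p : ℕ) (hp : p.Prime) (hodd : Odd p)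
    (r : ℕ) (hr : 3 ≤ r) (v : ℕ) (hv : v < p ^ (r - 1)) (hvp : Nat.Coprime v p)
    (i j : ℕ) (hi : i < p) (hj : j ≤ (p ^ (r - 2) - 1) / 2)
    (hQ : eulerQuotient p (r - 1) v = j + i * p ^ (r - 2)) :
    (fiberSet p r v ∩ classC0 p r).card = (p + 1) / 2 ∧
    (fiberSet p r v ∩ classC1 p r).card = (p - 1) / 2 :=
  fiber_inter_classes_card_low_general p hp hodd r hr v hv hvp i j hj hQ
end

section
/- Let p be an odd prime and 𝔯 ≥ 3. With C_0, C_1, V_v as above: if Q_{𝔯−1}(v) = j + i·p^{𝔯−2} with 0 ≤ i < p and (p^{𝔯−2}+1)/2 ≤ j ≤ p^{𝔯−2}−1, then |V_v ∩ C_0| = (p−1)/2 and |V_v ∩ C_1| = (p+1)/2. -/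
lemma binom_sq (a b : ℤ) : ∀ n : ℕ, ∃ c : ℤ, (a+b)^n = a^n + n * a^(n-1) * b + c * b^2 := by
  intro n
  induction n with
  | zero => exact ⟨0, by ring⟩
  | succ m ih =>
    rcases ih with ⟨c, hc⟩
    cases m with
    | zero => exact ⟨0, by ring⟩
    | succ k =>
      refine ⟨c*(a+b) + (k+1)*a^k, ?_⟩
      have h2 : (a+b)^(k+2) = (a+b)^(k+1) * (a+b) := by ring
      rw [h2, hc]; push_cast; ring

lemma euler_dvd (p : ℕ) (hp : p.Prime) (t u : ℕ) (hu : u.Coprime p) :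
    p^(t+1) ∣ u^(p^t*(p-1)) - 1 := by
  have hcop : u.Coprime (p^(t+1)) := hu.pow_right _
  have htot : (p^(t+1)).totient = p^t*(p-1) := by
    rw [Nat.totient_prime_pow hp (Nat.succ_pos t)]; simp
  have h := Nat.ModEq.pow_totient hcop
  rw [htot] at h
  have hu1 : 1 ≤ u ^ (p^t*(p-1)) := Nat.one_le_pow _ _ (Nat.pos_of_ne_zero (by
    rintro rfl
    simp [Nat.Coprime] at hu
    exact hp.one_lt.ne' hu))
  exact (Nat.modEq_iff_dvd' hu1).mp h.symm

lemma Q_shift (p : ℕ) (hp : p.Prime) (t v k : ℕ) (hvp : v.Coprime p) :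
    eulerQuotient p (t+1) (v + k * p^(t+1)) =
      (eulerQuotient p (t+1) v + k * ((p-1) * v^(p^t*(p-1) - 1)) * p^t) % p^(t+1) := by
  set e := p^t*(p-1) with he
  set N := p^(t+1) with hN
  set u := v + k * N with hu
  have hNpos : 0 < N := pow_pos hp.pos _
  have hup : u.Coprime p := by
    have h2 : u = v + k * p ^ t * p := by rw [hu, hN]; ring
    rw [h2]
    exact (Nat.coprime_add_mul_right_left v p (k*p^t)).mpr hvp
  have hvpos : 0 < v := Nat.pos_of_ne_zero (by
    rintro rfl; simp [Nat.Coprime] at hvp; exact hp.one_lt.ne' hvp)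
  have hd0 : N ∣ v^e - 1 := euler_dvd p hp t v hvp
  have hdk : N ∣ u^e - 1 := euler_dvd p hp t u hup
  have hv1 : 1 ≤ v ^ e := Nat.one_le_pow _ _ hvpos
  have hu1 : 1 ≤ u ^ e := Nat.one_le_pow _ _ (by positivity)
  set q0 := (v^e - 1)/N with hq0
  set qk := (u^e - 1)/N with hqk
  have hm0 : N * q0 = v^e - 1 := Nat.mul_div_cancel' hd0
  have hmk : N * qk = u^e - 1 := Nat.mul_div_cancel' hdk
  have hm0' : (N:ℤ) * q0 = (v:ℤ)^e - 1 := by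
    have h3 := congrArg (Nat.cast : ℕ → ℤ) hm0
    rw [Nat.cast_sub hv1] at h3
    push_cast at h3 ⊢; linarith
  have hmk' : (N:ℤ) * qk = (u:ℤ)^e - 1 := by
    have h3 := congrArg (Nat.cast : ℕ → ℤ) hmk
    rw [Nat.cast_sub hu1] at h3
    push_cast at h3 ⊢; linarith
  obtain ⟨c, hc⟩ := binom_sq (v:ℤ) ((k:ℤ)*N) e
  have hue : (u:ℤ) = (v:ℤ) + (k:ℤ)*N := by push_cast [hu]; ring
  have key : (qk : ℤ) = q0 + e * (v:ℤ)^(e-1) * k + (c*k^2) * N := by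
    have hN0 : (N:ℤ) ≠ 0 := by exact_mod_cast hNpos.ne'
    apply mul_left_cancel₀ hN0
    rw [hmk', hue, hc]
    linear_combination -hm0'
  have keymod : (qk : ℤ) % N = ((q0 + e * v^(e-1) * k : ℕ) : ℤ) % N := by
    rw [key]
    push_cast
    rw [Int.add_mul_emod_self_right]
  have keynat : qk % N = (q0 + e * v^(e-1) * k) % N := by
    rw [← Int.natCast_mod, ← Int.natCast_mod] at keymod
    exact_mod_cast keymod
  show (u ^ (p ^ ((t+1) - 1) * (p - 1)) - 1) / p^(t+1) % p^(t+1)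
      = ((v ^ (p ^ ((t+1) - 1) * (p - 1)) - 1) / p^(t+1) % p^(t+1) + k * ((p-1) * v^(p^t*(p-1) - 1)) * p^t) % N
  simp only [Nat.add_sub_cancel]
  rw [← hN, ← he, ← hq0, ← hqk, keynat, Nat.mod_add_mod]
  congr 1
  rw [he]; ring

lemma digit_mod (p t j m : ℕ) (hp : 0 < p) (hj : j < p^t) :
    (j + m * p^t) % (p^(t+1)) = j + (m % p) * p^t := by
  have h1 : j + m * p^t = (j + (m % p) * p^t) + (m / p) * p^(t+1) := by
    conv_lhs => rw [show m = p * (m/p) + m % p from (Nat.div_add_mod m p).symm]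
    ring
  rw [h1, Nat.add_mul_mod_self_right]
  apply Nat.mod_eq_of_lt
  have h2 : m % p ≤ p - 1 := by have := Nat.mod_lt m hp; omega
  have h3 : (m % p) * p^t ≤ (p-1) * p^t := Nat.mul_le_mul_right _ h2
  have h4 : j + (m % p) * p^t < p^t + (p-1)*p^t :=
    Nat.add_lt_add_of_lt_of_le hj h3
  have hps : p - 1 + 1 = p := by omega
  calc j + (m % p) * p^t < p^t + (p-1)*p^t := h4
    _ = ((p-1)+1) * p^t := by ring
    _ = p * p^t := by rw [hps]
    _ = p^(t+1) := by rw [pow_succ]; ring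

lemma count_filter_mod (p w i : ℕ) (hp : 0 < p) (hw : w.Coprime p)
    (P : ℕ → Prop) [DecidablePred P] :
    ((Finset.range p).filter (fun k => P ((i + k*w) % p))).card
      = ((Finset.range p).filter P).card := by
  set f : ℕ → ℕ := fun k => (i + k*w) % p with hf
  have hinj : Set.InjOn f (Finset.range p) := by
    intro k1 h1 k2 h2 h
    simp only [Finset.coe_range, Set.mem_Iio] at h1 h2
    have hm : i + k1*w ≡ i + k2*w [MOD p] := h
    have hm2 : k1*w ≡ k2*w [MOD p] := (Nat.ModEq.add_left_cancel' i hm)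
    have hm3 : k1 ≡ k2 [MOD p] := Nat.ModEq.cancel_right_of_coprime (by rwa [Nat.coprime_comm] at hw) hm2
    rwa [Nat.ModEq, Nat.mod_eq_of_lt h1, Nat.mod_eq_of_lt h2] at hm3
  have himg : (Finset.range p).image f = Finset.range p := by
    apply Finset.eq_of_subset_of_card_le
    · intro x hx
      simp only [Finset.mem_image] at hx
      obtain ⟨k, _, rfl⟩ := hx
      simp only [Finset.mem_range, hf]
      exact Nat.mod_lt _ hp
    · rw [Finset.card_image_of_injOn hinj]
  conv_rhs => rw [← himg, Finset.filter_image]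
  rw [Finset.card_image_of_injOn (hinj.mono (Finset.filter_subset _ _))]

lemma digit_iff_lt (a b j m : ℕ) (h1 : b+1 ≤ j) (h2 : j ≤ 2*b) :
    (j + m*(2*b+1) ≤ 2*(a*b) + a + b ↔ m < a) := by
  constructor
  · intro h
    by_contra h'
    push_neg at h'
    have h3 : a*(2*b+1) ≤ m*(2*b+1) := Nat.mul_le_mul_right _ h'
    nlinarith
  · intro h
    have h3 : (m+1)*(2*b+1) ≤ a*(2*b+1) := Nat.mul_le_mul_right _ h
    nlinarith

lemma digit_iff_ge (a b j m : ℕ) (h1 : b+1 ≤ j) (h2 : j ≤ 2*b) :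
    (2*(a*b) + a + b + 1 ≤ j + m*(2*b+1) ↔ a ≤ m) := by
  constructor
  · intro h
    by_contra h'
    push_neg at h'
    have h3 : (m+1)*(2*b+1) ≤ a*(2*b+1) := Nat.mul_le_mul_right _ h'
    nlinarith
  · intro h
    have h3 : a*(2*b+1) ≤ m*(2*b+1) := Nat.mul_le_mul_right _ h
    nlinarith

theorem fiber_inter_classes_card_high (p : ℕ) (hp : p.Prime) (hodd : Odd p)
    (r : ℕ) (hr : 3 ≤ r) (v : ℕ) (hv : v < p ^ (r - 1)) (hvp : Nat.Coprime v p)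
    (i j : ℕ) (hi : i < p) (hj1 : (p ^ (r - 2) + 1) / 2 ≤ j) (hj2 : j ≤ p ^ (r - 2) - 1)
    (hQ : eulerQuotient p (r - 1) v = j + i * p ^ (r - 2)) :
    (fiberSet p r v ∩ classC0 p r).card = (p - 1) / 2 ∧
    (fiberSet p r v ∩ classC1 p r).card = (p + 1) / 2 := by
  obtain ⟨t, rfl⟩ : ∃ t, r = t + 2 := ⟨r - 2, by omega⟩
  have ht : 1 ≤ t := by omega
  have h1t : t + 2 - 1 = t + 1 := rfl
  have h2t : t + 2 - 2 = t := rfl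
  rw [h1t] at hv hQ
  rw [h2t] at hj1 hj2 hQ
  -- basic quantities
  set P := p^t with hP
  set N := p^(t+1) with hN
  set e := p^t*(p-1) with he
  set w := (p-1) * v^(e-1) with hw
  have hp3 : 3 ≤ p := by
    rcases hodd with ⟨c, hc⟩
    have := hp.two_le
    omega
  obtain ⟨a, hpa⟩ := hodd
  have hPodd : Odd P := Odd.pow ⟨a, hpa⟩
  obtain ⟨b, hPb⟩ := hPodd
  have ha1 : 1 ≤ a := by omega
  have hPp : p ≤ P := by
    calc p = p^1 := (pow_one p).symm
    _ ≤ p^t := Nat.pow_le_pow_right hp.pos ht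
  have hb1 : 1 ≤ b := by omega
  have hj1' : b + 1 ≤ j := by omega
  have hj2' : j ≤ 2*b := by omega
  have hjP : j < P := by omega
  have hNP : N = P * p := by rw [hN, hP, pow_succ]
  have hNval : N = 4*(a*b) + 2*a + 2*b + 1 := by
    rw [hNP, hPb, hpa]; ring
  -- coprimality of w
  have hp1cop : Nat.Coprime (p-1) p := by
    have : Nat.Coprime p (p-1) := (Nat.Prime.coprime_iff_not_dvd hp).mpr (by
      intro hdvd
      have := Nat.le_of_dvd (by omega) hdvd
      omega)
    exact this.symm
  have hwcop : w.Coprime p := Nat.Coprime.mul hp1cop (hvp.pow_left _)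
  -- Euler quotient on the fiber
  have hQk : ∀ k : ℕ, eulerQuotient p (t+1) (v + k*N) = j + ((i + k*w) % p) * P := by
    intro k
    have h := Q_shift p hp t v k hvp
    rw [hQ] at h
    rw [hN]
    rw [h]
    have h5 : j + i * P + k * ((p-1) * v^(p^t*(p-1) - 1)) * P = j + (i + k*w) * P := by
      rw [hw, he]; ring
    calc (j + i * p^t + k * ((p-1) * v^(p^t*(p-1) - 1)) * p^t) % p^(t+1)
        = (j + (i + k*w) * P) % p^(t+1) := by rw [← h5]
      _ = j + ((i + k*w) % p) * P := digit_mod p t j (i + k*w) hp.pos hjP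
  -- fiber elements
  have hcopk : ∀ k : ℕ, (v + k*N).Coprime p := by
    intro k
    have h2 : v + k*N = v + k * p ^ t * p := by rw [hNP, hP]; ring
    rw [h2]
    exact (Nat.coprime_add_mul_right_left v p (k*p^t)).mpr hvp
  have hltk : ∀ k : ℕ, k < p → v + k*N < p^(t+2) := by
    intro k hk
    have h2 : k * N ≤ (p-1) * N := Nat.mul_le_mul_right _ (by omega)
    have h3 : p^(t+2) = p * N := by rw [hN]; ring
    have hc : p - 1 + 1 = p := by omega
    have h4 : p * N = N + (p-1)*N := by
      calc p * N = ((p-1)+1) * N := by rw [hc]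
        _ = N + (p-1)*N := by ring
    omega
  -- membership characterizations
  have hmem0 : ∀ k : ℕ, k < p → ((v + k*N) ∈ classC0 p (t+2) ↔ (i + k*w) % p < a) := by
    intro k hk
    have hnd : ¬ p ∣ (v + k*N) :=
      (Nat.Prime.coprime_iff_not_dvd hp).mp (hcopk k).symm
    simp only [classC0, levelSetD, Finset.mem_union, Finset.mem_biUnion, Finset.mem_range,
      Finset.mem_filter, h1t]
    have hNv : (p^(t+1) - 1)/2 = 2*(a*b) + a + b := by omega
    constructor
    · rintro (⟨l, hl, _, _, hQl⟩ | ⟨_, hdvd⟩)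
      · rw [hQk k] at hQl
        rw [← hQl, hPb] at hl
        exact (digit_iff_lt a b j ((i + k*w) % p) hj1' hj2').mp (by omega)
      · exact absurd hdvd hnd
    · intro hm
      left
      refine ⟨eulerQuotient p (t+1) (v + k*N), ?_, hltk k hk, hcopk k, rfl⟩
      rw [hQk k, hPb]
      have h6 := (digit_iff_lt a b j ((i + k*w) % p) hj1' hj2').mpr hm
      omega
  have hmem1 : ∀ k : ℕ, k < p → ((v + k*N) ∈ classC1 p (t+2) ↔ a ≤ (i + k*w) % p) := by
    intro k hk
    simp only [classC1, levelSetD, Finset.mem_biUnion, Finset.mem_Icc,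
      Finset.mem_filter, Finset.mem_range, h1t]
    have hmlt : (i + k*w) % p < p := Nat.mod_lt _ hp.pos
    have hNv : (p^(t+1) + 1)/2 = 2*(a*b) + a + b + 1 := by omega
    have hub : j + ((i + k*w) % p) * (2*b+1) ≤ p^(t+1) - 1 := by
      have h7 : ((i + k*w) % p) * (2*b+1) ≤ (2*a) * (2*b+1) :=
        Nat.mul_le_mul_right _ (by omega)
      have h8 : p^(t+1) = 4*(a*b) + 2*a + 2*b + 1 := by omega
      have h9 : (2*a)*(2*b+1) = 4*(a*b) + 2*a := by ring
      omega
    constructor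
    · rintro ⟨l, ⟨hl1, _⟩, _, _, hQl⟩
      rw [hQk k] at hQl
      rw [← hQl, hPb] at hl1
      exact (digit_iff_ge a b j ((i + k*w) % p) hj1' hj2').mp (by omega)
    · intro hm
      refine ⟨eulerQuotient p (t+1) (v + k*N), ⟨?_, ?_⟩, hltk k hk, hcopk k, rfl⟩
      · rw [hQk k, hPb]
        have h6 := (digit_iff_ge a b j ((i + k*w) % p) hj1' hj2').mpr hm
        omega
      · rw [hQk k, hPb]
        exact hub
  -- fiber intersection cardinalities
  have hfinj : Set.InjOn (fun k => v + k * p^(t+1)) (Finset.range p) := by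
    intro k1 _ k2 _ h
    simp only at h
    have hNpos : 0 < p^(t+1) := pow_pos hp.pos _
    exact Nat.eq_of_mul_eq_mul_right hNpos (by omega)
  have hfib : ∀ C : Finset ℕ, (fiberSet p (t+2) v ∩ C).card
      = ((Finset.range p).filter (fun k => (v + k*N) ∈ C)).card := by
    intro C
    rw [fiberSet, h1t, ← Finset.filter_mem_eq_inter, Finset.filter_image,
      Finset.card_image_of_injOn (hfinj.mono (Finset.filter_subset _ _))]
  constructor
  · rw [hfib]
    have hcongr : (Finset.range p).filter (fun k => (v + k*N) ∈ classC0 p (t+2))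
        = (Finset.range p).filter (fun k => (i + k*w) % p < a) := by
      apply Finset.filter_congr
      intro k hk
      simp only [Finset.mem_range] at hk
      simp [hmem0 k hk]
    rw [hcongr, count_filter_mod p w i hp.pos hwcop (· < a)]
    have : (Finset.range p).filter (· < a) = Finset.range a := by
      ext x
      simp only [Finset.mem_filter, Finset.mem_range]
      omega
    rw [this, Finset.card_range]
    omega
  · rw [hfib]
    have hcongr : (Finset.range p).filter (fun k => (v + k*N) ∈ classC1 p (t+2))
        = (Finset.range p).filter (fun k => a ≤ (i + k*w) % p) := by
      apply Finset.filter_congr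
      intro k hk
      simp only [Finset.mem_range] at hk
      simp [hmem1 k hk]
    rw [hcongr, count_filter_mod p w i hp.pos hwcop (a ≤ ·)]
    have : (Finset.range p).filter (a ≤ ·) = Finset.Ico a p := by
      ext x
      simp only [Finset.mem_filter, Finset.mem_range, Finset.mem_Ico]
      omega
    rw [this, Nat.card_Ico]
    omega
end

section
/- Let p be an odd prime and r ≥ 3. In F_2[X], S^{(p^r)}(X) ≡ ((p+1)/2)·S^{(p^{r−1})}(X) + ((p−1)/2)·S̄^{(p^{r−1})}(X) (mod X^{p^{r−1}}−1), where coefficients are taken modulo 2. -/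
open Polynomial

/-- `d_l^{(p^r)}(X) = Σ_{n ∈ D_l^{(p^r)}} X^n ∈ F_2[X]`. -/
noncomputable def dPoly (p r l : ℕ) : Polynomial (ZMod 2) :=
  ∑ n ∈ levelSetD p r l, X ^ n

/-- `S^{(p^r)}(X) = Σ_{l=(p^{r-1}+1)/2}^{p^{r-1}-1} d_l^{(p^r)}(X)`. -/
noncomputable def SPoly (p r : ℕ) : Polynomial (ZMod 2) :=
  ∑ l ∈ Finset.Icc ((p ^ (r - 1) + 1) / 2) (p ^ (r - 1) - 1), dPoly p r l

/-- `S̄^{(p^r)}(X) = Σ_{l=0}^{(p^{r-1}-1)/2} d_l^{(p^r)}(X)`. -/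
noncomputable def SbarPoly (p r : ℕ) : Polynomial (ZMod 2) :=
  ∑ l ∈ Finset.range ((p ^ (r - 1) - 1) / 2 + 1), dPoly p r l

/-!
Modulo `X ^ m - 1` with `m = p ^ (r - 1)` only `n mod m` matters, so for `v < m` prime to `p` the
coefficient of `X ^ v` in `S^{(p^r)}` is the number of `t < p` for which `Q_{r-1}(v + t m)` lies in
the upper half `[(m + 1) / 2, m - 1]`. Binomial expansion gives
`Q_{r-1}(v + t m) ≡ Q_{r-1}(v) + φ(m) v^{φ(m) - 1} t (mod m)`, and, `p` being odd,
`Q_{r-1}(v) ≡ Q_{r-2}(v) (mod p^{r-2})`. Hence, as `t` runs over `[0, p)`, these quotients run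
exactly once through the progression `Q_{r-2}(v) + j p^{r-2}`, `j < p`, of which `(p - 1) / 2`
terms lie in the upper half, plus one more exactly when `Q_{r-2}(v)` lies in the upper half
modulo `p^{r-2}`.
-/

open Finset

theorem one_add_pow_of_pow_three_eq_zero {R : Type*} [CommRing R] {e : R} (he : e ^ 3 = 0)
    (n : ℕ) : (1 + e) ^ n = 1 + n * e + n.choose 2 * e ^ 2 := by
  induction n with
  | zero => simp
  | succ n ih =>
    have hchoose : (n + 1).choose 2 = n + n.choose 2 := by simpa using Nat.choose_succ_succ' n 1
    rw [pow_succ, ih, hchoose]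
    push_cast
    linear_combination (n.choose 2 : R) * he

theorem Odd.dvd_choose_two {n : ℕ} (hn : Odd n) : n ∣ n.choose 2 := by
  obtain ⟨k, rfl⟩ := hn
  exact ⟨k, by rw [Nat.choose_two_right, Nat.add_sub_cancel, mul_left_comm,
    Nat.mul_div_cancel_left _ two_pos]⟩

theorem one_add_pow_of_mul_sq_eq_zero {R : Type*} [CommRing R] {e : R} {n : ℕ} (hn : Odd n)
    (hne : n * e ^ 2 = 0) (he : e ^ 3 = 0) : (1 + e) ^ n = 1 + n * e := by
  obtain ⟨c, hc⟩ := hn.dvd_choose_two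
  rw [one_add_pow_of_pow_three_eq_zero he, hc]
  push_cast
  linear_combination (c : R) * hne

theorem modEq_of_one_add_pow {p k a b : ℕ} (hp : Odd p) (hk : 1 ≤ k)
    (h : (1 + p ^ k * a) ^ p = 1 + p ^ (k + 1) * b) : b ≡ a [MOD p ^ k] := by
  have hp0 : p ^ (k + 1) ≠ 0 := pow_ne_zero _ (by rintro rfl; simp at hp)
  set e : ZMod (p ^ (k + 1) * p ^ k) := ((p ^ k * a : ℕ) : ZMod (p ^ (k + 1) * p ^ k))
  have hne : (p : ZMod (p ^ (k + 1) * p ^ k)) * e ^ 2 = 0 := by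
    rw [← Nat.cast_pow, ← Nat.cast_mul, ZMod.natCast_eq_zero_iff]
    exact ⟨a ^ 2, by ring⟩
  have he : e ^ 3 = 0 := by
    rw [← Nat.cast_pow, ZMod.natCast_eq_zero_iff, mul_pow, ← pow_mul, ← pow_add]
    exact (pow_dvd_pow p (by omega)).mul_right _
  have hcast := congrArg (Nat.cast : ℕ → ZMod (p ^ (k + 1) * p ^ k)) h
  push_cast at hcast
  rw [← Nat.cast_pow, ← Nat.cast_mul, one_add_pow_of_mul_sq_eq_zero hp hne he] at hcast
  refine Nat.ModEq.mul_left_cancel' hp0 ((ZMod.natCast_eq_natCast_iff _ _ _).mp ?_)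
  simp only [e] at hcast
  push_cast at hcast ⊢
  linear_combination -hcast

theorem modEq_of_add_mul_pow {m N v t a b : ℕ} (hm : m ≠ 0) (ha : v ^ N = 1 + m * a)
    (hb : (v + t * m) ^ N = 1 + m * b) : b ≡ a + N * v ^ (N - 1) * t [MOD m] := by
  have hsq : ((t * m : ℕ) : ZMod (m * m)) ^ 2 = 0 := by
    rw [← Nat.cast_pow, ZMod.natCast_eq_zero_iff]
    exact ⟨t ^ 2, by ring⟩
  have hexp := sq_dvd_add_pow_sub_sub ((t * m : ℕ) : ZMod (m * m)) v N
  rw [hsq, zero_dvd_iff, ← Nat.cast_add, ← Nat.cast_pow, hb, ← Nat.cast_pow v N, ha] at hexp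
  refine Nat.ModEq.mul_left_cancel' hm ((ZMod.natCast_eq_natCast_iff _ _ _).mp ?_)
  push_cast at hexp ⊢
  linear_combination hexp

theorem Nat.coprime_add_mul_pow_left_iff {p s : ℕ} (hs : s ≠ 0) (v t : ℕ) :
    (v + t * p ^ s).Coprime p ↔ v.Coprime p := by
  rw [← Nat.succ_pred_eq_of_ne_zero hs, pow_succ, ← mul_assoc, Nat.coprime_add_mul_right_left]

theorem exists_eulerQuotient_eq_mod {p s u : ℕ} (hp : p.Prime) (hs : s ≠ 0) (hu : u.Coprime p) :
    ∃ q, u ^ (p ^ (s - 1) * (p - 1)) = 1 + p ^ s * q ∧ eulerQuotient p s u = q % p ^ s := by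
  have hmod : u ^ (p ^ (s - 1) * (p - 1)) ≡ 1 [MOD p ^ s] := by
    simpa [Nat.totient_prime_pow hp (Nat.pos_of_ne_zero hs)] using
      Nat.ModEq.pow_totient (hu.pow_right s)
  have hpos : 1 ≤ u ^ (p ^ (s - 1) * (p - 1)) :=
    Nat.one_le_pow _ _ (Nat.pos_of_ne_zero (by rintro rfl; exact hp.ne_one (by simpa using hu)))
  obtain ⟨q, hq⟩ := (Nat.modEq_iff_dvd' hpos).mp hmod.symm
  have hpow : u ^ (p ^ (s - 1) * (p - 1)) = 1 + p ^ s * q := by omega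
  refine ⟨q, hpow, ?_⟩
  rw [eulerQuotient, hpow, Nat.add_sub_cancel_left, Nat.mul_div_cancel_left _ (pow_pos hp.pos s)]

theorem eulerQuotient_add_mul_modEq {p s v : ℕ} (hp : p.Prime) (hs : s ≠ 0) (hv : v.Coprime p)
    (t : ℕ) :
    eulerQuotient p s (v + t * p ^ s) ≡
      eulerQuotient p s v + p ^ (s - 1) * (p - 1) * v ^ (p ^ (s - 1) * (p - 1) - 1) * t
        [MOD p ^ s] := by
  obtain ⟨a, ha, hQa⟩ := exists_eulerQuotient_eq_mod hp hs hv
  obtain ⟨b, hb, hQb⟩ :=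
    exists_eulerQuotient_eq_mod hp hs ((Nat.coprime_add_mul_pow_left_iff hs v t).mpr hv)
  rw [hQa, hQb]
  exact (Nat.mod_modEq b _).trans <| (modEq_of_add_mul_pow (pow_ne_zero s hp.ne_zero) ha hb).trans
    ((Nat.mod_modEq a _).symm.add_right _)

theorem eulerQuotient_succ_mod {p s v : ℕ} (hp : p.Prime) (hodd : Odd p) (hs : s ≠ 0)
    (hv : v.Coprime p) : eulerQuotient p (s + 1) v % p ^ s = eulerQuotient p s v := by
  obtain ⟨a, ha, hQa⟩ := exists_eulerQuotient_eq_mod hp hs hv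
  obtain ⟨b, hb, hQb⟩ := exists_eulerQuotient_eq_mod hp s.add_one_ne_zero hv
  have hpow : (1 + p ^ s * a) ^ p = 1 + p ^ (s + 1) * b := by
    rw [← ha, ← hb, ← pow_mul, Nat.add_sub_cancel]
    obtain ⟨k, rfl⟩ := Nat.exists_eq_succ_of_ne_zero hs
    simp only [Nat.succ_sub_one, pow_succ]
    ring
  rw [hQa, hQb, Nat.mod_mod_of_dvd _ (pow_dvd_pow p s.le_succ)]
  exact modEq_of_one_add_pow hodd (Nat.pos_of_ne_zero hs) hpow

theorem Finset.card_filter_image_of_injOn {α β : Type*} [DecidableEq β] {f : α → β}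
    {s : Finset α} (hf : Set.InjOn f s) (P : β → Prop) [DecidablePred P] :
    ((s.image f).filter P).card = (s.filter fun a => P (f a)).card := by
  rw [filter_image, card_image_of_injOn (hf.mono (filter_subset _ s))]

theorem card_filter_add_mul_mem_Icc {p m c : ℕ} (hp : Odd p) (hm : Odd m) (hc : c < m) :
    ((range p).filter (fun j => c + j * m ∈ Icc ((m * p + 1) / 2) (m * p - 1))).card
      = (p - 1) / 2 + if c ∈ Icc ((m + 1) / 2) (m - 1) then 1 else 0 := by
  obtain ⟨h, rfl⟩ := hp
  obtain ⟨k, rfl⟩ := hm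
  have hmp : (2 * k + 1) * (2 * h + 1) = 2 * (h * (2 * k + 1)) + (2 * k + 1) := by ring
  have hfilter : (range (2 * h + 1)).filter
      (fun j => c + j * (2 * k + 1) ∈
        Icc (((2 * k + 1) * (2 * h + 1) + 1) / 2) ((2 * k + 1) * (2 * h + 1) - 1)) =
      Ico (if k + 1 ≤ c then h else h + 1) (2 * h + 1) := by
    ext j
    simp only [mem_filter, mem_range, mem_Icc, mem_Ico, hmp]
    have hjm : j ≤ 2 * h → j * (2 * k + 1) ≤ 2 * (h * (2 * k + 1)) := fun hj => by
      nlinarith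
    rcases lt_trichotomy j h with hj | rfl | hj
    · have : j * (2 * k + 1) + (2 * k + 1) ≤ h * (2 * k + 1) := by nlinarith
      split_ifs <;> omega
    · split_ifs <;> omega
    · have : h * (2 * k + 1) + (2 * k + 1) ≤ j * (2 * k + 1) := by nlinarith
      split_ifs <;> omega
  rw [hfilter, Nat.card_Ico]
  simp only [mem_Icc]
  split_ifs <;> omega

section Lift

variable {p s v : ℕ}

theorem eulerQuotient_add_mul_mod (hp : p.Prime) (hodd : Odd p) (hs : s ≠ 0)
    (hv : v.Coprime p) (t : ℕ) :
    eulerQuotient p (s + 1) (v + t * p ^ (s + 1)) % p ^ s = eulerQuotient p s v := by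
  have h := (eulerQuotient_add_mul_modEq hp s.add_one_ne_zero hv t).of_dvd
    (pow_dvd_pow p s.le_succ)
  rw [Nat.add_sub_cancel, mul_assoc, mul_assoc, Nat.ModEq, Nat.add_mul_mod_self_left] at h
  rw [h, eulerQuotient_succ_mod hp hodd hs hv]

theorem injOn_eulerQuotient_add_mul (hp : p.Prime) (hv : v.Coprime p) :
    Set.InjOn (fun t => eulerQuotient p (s + 1) (v + t * p ^ (s + 1))) (range p) := by
  intro t₁ ht₁ t₂ ht₂ heq
  have h₁ := eulerQuotient_add_mul_modEq hp s.add_one_ne_zero hv t₁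
  have h₂ := eulerQuotient_add_mul_modEq hp s.add_one_ne_zero hv t₂
  simp only at heq
  rw [heq] at h₁
  set w := (p - 1) * v ^ (p ^ s * (p - 1) - 1)
  have hw : Nat.gcd p w = 1 :=
    Nat.Coprime.mul_right ((Nat.coprime_self_sub_left hp.one_le).mpr (Nat.coprime_one_left p)).symm
      (Nat.Coprime.pow_right _ hv.symm)
  have h : p ^ s * (w * t₁) ≡ p ^ s * (w * t₂) [MOD p ^ s * p] := by
    rw [← pow_succ]
    simpa only [Nat.add_sub_cancel, w, mul_assoc] using
      (Nat.ModEq.add_left_cancel' _ (h₁.symm.trans h₂))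
  exact ((Nat.ModEq.mul_left_cancel' (pow_ne_zero s hp.ne_zero) h).cancel_left_of_coprime hw
    ).eq_of_lt_of_lt (mem_range.mp ht₁) (mem_range.mp ht₂)

theorem image_eulerQuotient_add_mul (hp : p.Prime) (hodd : Odd p) (hs : s ≠ 0)
    (hv : v.Coprime p) :
    (range p).image (fun t => eulerQuotient p (s + 1) (v + t * p ^ (s + 1))) =
      (range p).image (fun j => eulerQuotient p s v + j * p ^ s) := by
  refine eq_of_subset_of_card_le (fun x hx => ?_) ?_
  · obtain ⟨t, -, rfl⟩ := mem_image.mp hx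
    have hlt : eulerQuotient p (s + 1) (v + t * p ^ (s + 1)) < p ^ s * p :=
      pow_succ p s ▸ Nat.mod_lt _ (pow_pos hp.pos _)
    refine mem_image.mpr ⟨_, mem_range.mpr (Nat.div_lt_of_lt_mul hlt), ?_⟩
    rw [← eulerQuotient_add_mul_mod hp hodd hs hv t, Nat.mod_add_div']
  · rw [card_image_of_injOn (injOn_eulerQuotient_add_mul hp hv)]
    exact card_image_le

theorem card_filter_eulerQuotient_mem_Icc (hp : p.Prime) (hodd : Odd p) (hs : s ≠ 0)
    (hv : v.Coprime p) :
    ((range p).filter (fun t => eulerQuotient p (s + 1) (v + t * p ^ (s + 1)) ∈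
        Icc ((p ^ (s + 1) + 1) / 2) (p ^ (s + 1) - 1))).card =
      (p - 1) / 2 +
        if eulerQuotient p s v ∈ Icc ((p ^ s + 1) / 2) (p ^ s - 1) then 1 else 0 := by
  have hG : Set.InjOn (fun j => eulerQuotient p s v + j * p ^ s) (range p) :=
    fun j₁ _ j₂ _ h => Nat.eq_of_mul_eq_mul_right (pow_pos hp.pos s) (Nat.add_left_cancel h)
  rw [← card_filter_image_of_injOn (injOn_eulerQuotient_add_mul hp hv)
      (· ∈ Icc ((p ^ (s + 1) + 1) / 2) (p ^ (s + 1) - 1)),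
    image_eulerQuotient_add_mul hp hodd hs hv, card_filter_image_of_injOn hG, pow_succ]
  exact card_filter_add_mul_mem_Icc hodd hodd.pow (Nat.mod_lt _ (pow_pos hp.pos s))

theorem card_filter_coprime_eulerQuotient_mem_Icc (hp : p.Prime) (hodd : Odd p) (hs : s ≠ 0) :
    ((range p).filter (fun t => (v + t * p ^ (s + 1)).Coprime p ∧
        eulerQuotient p (s + 1) (v + t * p ^ (s + 1)) ∈
          Icc ((p ^ (s + 1) + 1) / 2) (p ^ (s + 1) - 1))).card =
      (if v.Coprime p ∧ eulerQuotient p s v ∈ Icc ((p ^ s + 1) / 2) (p ^ s - 1)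
        then (p + 1) / 2 else 0) +
      (if v.Coprime p ∧ eulerQuotient p s v ∈ range ((p ^ s - 1) / 2 + 1)
        then (p - 1) / 2 else 0) := by
  simp only [Nat.coprime_add_mul_pow_left_iff s.add_one_ne_zero]
  by_cases hv : v.Coprime p
  · have hQ : eulerQuotient p s v < p ^ s := Nat.mod_lt _ (pow_pos hp.pos s)
    have hps : p ^ s % 2 = 1 := Nat.odd_iff.mp hodd.pow
    have hp2 : p % 2 = 1 := Nat.odd_iff.mp hodd
    simp only [eq_true hv, true_and]
    rw [card_filter_eulerQuotient_mem_Icc hp hodd hs hv]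
    simp only [mem_Icc, mem_range]
    split_ifs <;> omega
  · simp [hv]

end Lift

theorem Finset.sum_range_mul_eq_sum_sum {M : Type*} [AddCommMonoid M] (f : ℕ → M) (m p : ℕ) :
    ∑ n ∈ range (m * p), f n = ∑ v ∈ range m, ∑ t ∈ range p, f (v + t * m) := by
  induction p with
  | zero => simp
  | succ p ih =>
    rw [Nat.mul_succ, sum_range_add, ih, ← sum_add_distrib]
    refine sum_congr rfl fun v _ => ?_
    rw [sum_range_succ, add_comm (m * p) v, mul_comm m p]

theorem AdjoinRoot.root_X_pow_sub_one_pow {R : Type*} [CommRing R] (n : ℕ) :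
    AdjoinRoot.root (X ^ n - 1 : R[X]) ^ n = 1 := by
  rw [← sub_eq_zero, ← AdjoinRoot.eval₂_root, eval₂_sub, eval₂_pow, eval₂_X,
    eval₂_one]

theorem sum_filter_range_mul_pow {A : Type*} [CommSemiring A] {x : A} {m : ℕ} (hx : x ^ m = 1)
    (p : ℕ) (P : ℕ → Prop) [DecidablePred P] :
    ∑ n ∈ (range (m * p)).filter P, x ^ n =
      ∑ v ∈ range m, ((range p).filter fun t => P (v + t * m)).card • x ^ v := by
  rw [sum_filter, sum_range_mul_eq_sum_sum]
  refine sum_congr rfl fun v _ => ?_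
  rw [← sum_filter, ← sum_const]
  refine sum_congr rfl fun t _ => ?_
  rw [pow_add, mul_comm t m, pow_mul, hx, one_pow, mul_one]

theorem sum_dPoly (p r : ℕ) (L : Finset ℕ) :
    ∑ l ∈ L, dPoly p r l = ∑ n ∈ (range (p ^ r)).filter
      (fun u => u.Coprime p ∧ eulerQuotient p (r - 1) u ∈ L), X ^ n := by
  simp only [dPoly, levelSetD, ← filter_filter]
  exact sum_fiberwise_eq_sum_filter _ _ _ _

theorem SPoly_congr_combination (p : ℕ) (hp : p.Prime) (hodd : Odd p)
    (r : ℕ) (hr : 3 ≤ r) :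
    (X ^ (p ^ (r - 1)) - 1 : Polynomial (ZMod 2)) ∣
      (SPoly p r -
        (C ((((p + 1) / 2 : ℕ) : ZMod 2)) * SPoly p (r - 1) +
         C ((((p - 1) / 2 : ℕ) : ZMod 2)) * SbarPoly p (r - 1))) := by
  obtain ⟨s, rfl⟩ : ∃ s, r = s + 2 := ⟨r - 2, by omega⟩
  have hs : s ≠ 0 := by omega
  rw [show s + 2 - 1 = s + 1 from rfl, ← AdjoinRoot.mk_eq_mk]
  simp only [SPoly, SbarPoly, sum_dPoly, map_add, map_mul, map_sum, map_pow, map_natCast,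
    AdjoinRoot.mk_X, show s + 2 - 1 = s + 1 from rfl, Nat.add_sub_cancel]
  rw [show p ^ (s + 2) = p ^ (s + 1) * p from pow_succ p (s + 1),
    sum_filter_range_mul_pow (AdjoinRoot.root_X_pow_sub_one_pow _),
    sum_filter, sum_filter, mul_sum, mul_sum, ← sum_add_distrib]
  refine sum_congr rfl fun v _ => ?_
  rw [card_filter_coprime_eulerQuotient_mem_Icc hp hodd hs, add_smul]
  split_ifs <;> simp [nsmul_eq_mul]
end
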